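/- The function T(ω,s) = ∑_{k=1}^∞ s^k [ln s − 2H_{k-1} − H_k + ln ω + 3γ − ln 2] / ((k-1)!² k!) · (ω/2)^{k-1} satisfies the partial differential equation 2 ∂_ω (s ∂_s² T) = T for ω, s > 0, where ∂_s² denotes the second derivative in s. -/

import Mathlib

/-- The j-th harmonic number, `H_0 = 0`. -/
noncomputable def harmonicNumber (j : ℕ) : ℝ :=
  ∑ i ∈ Finset.range j, (1 : ℝ) / (i + 1)

/-- `T(ω,s) = ∑_{k=1}^∞ s^k [ln s − 2H_{k-1} − H_k + ln ω + 3γ − ln 2]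
      / ((k-1)!² k!) (ω/2)^{k-1}`. -/
noncomputable def Tfun (ω s : ℝ) : ℝ :=
  ∑' k : ℕ, s ^ (k + 1) *
    (Real.log s - 2 * harmonicNumber k - harmonicNumber (k + 1) + Real.log ω +
      3 * Real.eulerMascheroniConstant - Real.log 2) /
    (Nat.factorial k * Nat.factorial k * Nat.factorial (k + 1)) * (ω / 2) ^ k

/-!
With `z = ω s / 2` one has `T(ω, s) = s G(z)`, where `G z = ∑ (a_k log z + b_k) z^k` is a
log-power series with entire coefficients. Such series can be differentiated termwise, and the
Euler operator `θ = z d/dz` acts on their coefficients by `(a_k, b_k) ↦ (k a_k, a_k + k b_k)`.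
Since `s ∂_s` and `ω ∂_ω` both act as `θ` on functions of `z`, the equation becomes
`θ²(1 + θ) G = z G`, i.e. the recursion `k²(k+1) a_k = a_{k-1}` for `a_k = 1/(k!² (k+1)!)`
together with the harmonic-number recursion for `b_k`.
-/

open Real Filter Topology

theorem abs_log_le_of_mem_Icc {a b y : ℝ} (ha : 0 < a) (hy : y ∈ Set.Icc a b) :
    |log y| ≤ |log a| + |log b| := by
  have h₁ := log_le_log ha hy.1
  have h₂ := log_le_log (ha.trans_le hy.1) hy.2
  rw [abs_le]
  constructor <;> linarith [neg_abs_le (log a), le_abs_self (log b), abs_nonneg (log a),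
    abs_nonneg (log b)]

def EntireCoeffs (a : ℕ → ℝ) : Prop :=
  ∀ r : ℝ, Summable fun k => a k * r ^ k

namespace EntireCoeffs

variable {a b : ℕ → ℝ}

theorem summable_abs_mul_pow (ha : EntireCoeffs a) {R : ℝ} (hR : 0 ≤ R) :
    Summable fun k => |a k| * R ^ k :=
  (summable_abs_iff.2 (ha R)).congr fun k => by rw [abs_mul, abs_pow, abs_of_nonneg hR]

theorem of_abs_le (ha : EntireCoeffs a) (h : ∀ k, |b k| ≤ |a k|) : EntireCoeffs b := fun r =>
  (ha.summable_abs_mul_pow (abs_nonneg r)).of_norm_bounded fun k => by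
    rw [Real.norm_eq_abs, abs_mul, abs_pow]
    exact mul_le_mul_of_nonneg_right (h k) (by positivity)

theorem add (ha : EntireCoeffs a) (hb : EntireCoeffs b) : EntireCoeffs (a + b) := fun r =>
  ((ha r).add (hb r)).congr fun k => by simp only [Pi.add_apply]; ring

theorem const_mul (ha : EntireCoeffs a) (c : ℝ) : EntireCoeffs fun k => c * a k := fun r =>
  ((ha r).mul_left c).congr fun k => by ring

theorem natCast_mul (ha : EntireCoeffs a) : EntireCoeffs fun k => k * a k := fun r =>
  (ha.summable_abs_mul_pow (by positivity : 0 ≤ 2 * |r|)).of_norm_bounded fun k => by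
    have hk : (k : ℝ) ≤ 2 ^ k := by exact_mod_cast Nat.lt_two_pow_self.le
    rw [Real.norm_eq_abs, abs_mul, abs_mul, abs_pow, Nat.abs_cast, mul_pow]
    calc (k : ℝ) * |a k| * |r| ^ k ≤ 2 ^ k * |a k| * |r| ^ k := by gcongr
      _ = |a k| * (2 ^ k * |r| ^ k) := by ring

end EntireCoeffs

abbrev LogCoeffs := (ℕ → ℝ) × (ℕ → ℝ)

namespace LogCoeffs

def Entire (p : LogCoeffs) : Prop := EntireCoeffs p.1 ∧ EntireCoeffs p.2

def eulerOp (p : LogCoeffs) : LogCoeffs := (fun k => k * p.1 k, fun k => p.1 k + k * p.2 k)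

noncomputable def term (p : LogCoeffs) (z : ℝ) (k : ℕ) : ℝ := (p.1 k * log z + p.2 k) * z ^ k

noncomputable def sum (p : LogCoeffs) (z : ℝ) : ℝ := ∑' k, p.term z k

variable {p q : LogCoeffs}

theorem Entire.add (hp : p.Entire) (hq : q.Entire) : (p + q).Entire :=
  ⟨hp.1.add hq.1, hp.2.add hq.2⟩

theorem Entire.eulerOp (hp : p.Entire) : p.eulerOp.Entire :=
  ⟨hp.1.natCast_mul, hp.1.add hp.2.natCast_mul⟩

theorem Entire.summable_term (hp : p.Entire) (z : ℝ) : Summable (p.term z) :=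
  (((hp.1 z).mul_left (log z)).add (hp.2 z)).congr fun k => by unfold term; ring

theorem sum_add (hp : p.Entire) (hq : q.Entire) (z : ℝ) : (p + q).sum z = p.sum z + q.sum z := by
  rw [sum, sum, sum, ← (hp.summable_term z).tsum_add (hq.summable_term z)]
  exact tsum_congr fun k => by simp only [term, Prod.fst_add, Prod.snd_add, Pi.add_apply]; ring

theorem sum_eq_mul_sum_succ (h₁ : p.1 0 = 0) (h₂ : p.2 0 = 0) (z : ℝ) :
    p.sum z = z * sum (fun k => p.1 (k + 1), fun k => p.2 (k + 1)) z := by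
  have hsupp : Function.support (p.term z) ⊆ Set.range Nat.succ := by
    rintro (_ | k) hk
    · simp [term, h₁, h₂] at hk
    · exact ⟨k, rfl⟩
  rw [sum, sum, ← tsum_mul_left, ← Nat.succ_injective.tsum_eq hsupp]
  exact tsum_congr fun k => by simp only [term, pow_succ]; ring

theorem hasDerivAt_term (p : LogCoeffs) (k : ℕ) {y : ℝ} (hy : y ≠ 0) :
    HasDerivAt (fun y => p.term y k) (p.eulerOp.term y k / y) y := by
  have hlog := ((hasDerivAt_log hy).const_mul (p.1 k)).add_const (p.2 k)
  refine (hlog.mul (hasDerivAt_pow k y)).congr_deriv ?_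
  rcases k with _ | k
  · simp [term, eulerOp, div_eq_mul_inv]
  · simp only [term, eulerOp, Nat.add_sub_cancel, pow_succ]
    field_simp
    push_cast
    ring

theorem abs_term_le (p : LogCoeffs) (k : ℕ) {y R M : ℝ} (hy : 0 < y) (hyR : y ≤ R)
    (hM : |log y| ≤ M) : |p.term y k| ≤ (|p.1 k| * M + |p.2 k|) * R ^ k := by
  have hcoeff : |p.1 k * log y + p.2 k| ≤ |p.1 k| * M + |p.2 k| :=
    calc |p.1 k * log y + p.2 k| ≤ |p.1 k| * |log y| + |p.2 k| := by
          rw [← abs_mul]; exact abs_add_le _ _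
      _ ≤ |p.1 k| * M + |p.2 k| := by gcongr
  rw [term, abs_mul, abs_pow, abs_of_pos hy]
  exact mul_le_mul hcoeff (pow_le_pow_left₀ hy.le hyR k) (by positivity)
    ((abs_nonneg _).trans hcoeff)

theorem Entire.hasDerivAt_sum (hp : p.Entire) {z : ℝ} (hz : 0 < z) :
    HasDerivAt p.sum (p.eulerOp.sum z / z) z := by
  set M := |log (z / 2)| + |log (2 * z)|
  have hθ := hp.eulerOp
  have hu : Summable fun k => (|p.eulerOp.1 k| * M + |p.eulerOp.2 k|) * (2 * z) ^ k / (z / 2) := by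
    refine ((((hθ.1.summable_abs_mul_pow (R := 2 * z) (by positivity)).mul_left M).add
      (hθ.2.summable_abs_mul_pow (R := 2 * z) (by positivity))).div_const (z / 2)).congr
      fun k => ?_
    ring
  have hmem : z ∈ Set.Ioo (z / 2) (2 * z) := ⟨by linarith, by linarith⟩
  have htsum := hasDerivAt_tsum_of_isPreconnected hu isOpen_Ioo isPreconnected_Ioo
    (fun k y hy => p.hasDerivAt_term k (by linarith [hy.1] : (0 : ℝ) < y).ne')
    (fun k y hy => ?_) hmem (hp.summable_term z) hmem
  · rw [sum, ← tsum_div_const]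
    exact htsum
  · have hy₀ : 0 < y := by linarith [hy.1]
    rw [Real.norm_eq_abs, abs_div, abs_of_pos hy₀]
    gcongr
    · exact p.eulerOp.abs_term_le k hy₀ hy.2.le
        (abs_log_le_of_mem_Icc (by positivity) (Set.Ioo_subset_Icc_self hy))
    · exact hy.1.le

theorem Entire.hasDerivAt_sum_const_mul (hp : p.Entire) {c u : ℝ} (hcu : 0 < c * u) :
    HasDerivAt (fun v => p.sum (c * v)) (p.eulerOp.sum (c * u) / u) u := by
  have hu : u ≠ 0 := by rintro rfl; simp at hcu
  have hc : c ≠ 0 := by rintro rfl; simp at hcu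
  refine ((hp.hasDerivAt_sum hcu).comp u ((hasDerivAt_id u).const_mul c)).congr_deriv ?_
  field_simp

theorem Entire.hasDerivAt_mul_sum_const_mul (hp : p.Entire) {c u : ℝ} (hcu : 0 < c * u) :
    HasDerivAt (fun v => v * p.sum (c * v)) ((p + p.eulerOp).sum (c * u)) u := by
  have hu : u ≠ 0 := by rintro rfl; simp at hcu
  refine ((hasDerivAt_id u).mul (hp.hasDerivAt_sum_const_mul hcu)).congr_deriv ?_
  rw [sum_add hp hp.eulerOp, id, one_mul, mul_div_cancel₀ _ hu]

end LogCoeffs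

theorem harmonicNumber_nonneg (j : ℕ) : 0 ≤ harmonicNumber j :=
  Finset.sum_nonneg fun i _ => by positivity

theorem harmonicNumber_le (j : ℕ) : harmonicNumber j ≤ j := by
  have h := Finset.sum_le_card_nsmul (Finset.range j) (fun i : ℕ => (1 : ℝ) / (i + 1)) 1
    fun i _ => (div_le_one (by positivity)).2 (le_add_of_nonneg_left i.cast_nonneg)
  simpa [harmonicNumber] using h

theorem harmonicNumber_succ (j : ℕ) : harmonicNumber (j + 1) = harmonicNumber j + 1 / (j + 1) :=
  Finset.sum_range_succ _ j

noncomputable def tfunCoeffs : LogCoeffs :=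
  (fun k => 1 / (k.factorial * k.factorial * (k + 1).factorial),
    fun k => (3 * eulerMascheroniConstant - 2 * harmonicNumber k - harmonicNumber (k + 1)) /
      (k.factorial * k.factorial * (k + 1).factorial))

theorem entireCoeffs_inv_factorial : EntireCoeffs fun k => 1 / (k.factorial : ℝ) := fun r =>
  (Real.summable_pow_div_factorial r).congr fun k => by ring

theorem tfunCoeffs_entire : tfunCoeffs.Entire := by
  have hfst : EntireCoeffs tfunCoeffs.1 := entireCoeffs_inv_factorial.of_abs_le fun k => by
    have h₁ : (1 : ℝ) ≤ k.factorial := by exact_mod_cast k.factorial_pos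
    have h₂ : (1 : ℝ) ≤ (k + 1).factorial := by exact_mod_cast (k + 1).factorial_pos
    simp only [tfunCoeffs]
    rw [abs_of_pos (by positivity), abs_of_pos (by positivity)]
    exact one_div_le_one_div_of_le (by positivity) (by nlinarith)
  set C := 3 * |eulerMascheroniConstant| + 1
  refine ⟨hfst, ((hfst.const_mul C).add (hfst.natCast_mul.const_mul 3)).of_abs_le fun k => ?_⟩
  have ha : 0 < tfunCoeffs.1 k := by simp only [tfunCoeffs]; positivity
  have hd : |3 * eulerMascheroniConstant - 2 * harmonicNumber k - harmonicNumber (k + 1)| ≤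
      C + 3 * k := by
    have := harmonicNumber_le (k + 1)
    push_cast at this
    rw [abs_le]
    constructor <;> linarith [harmonicNumber_nonneg k, harmonicNumber_nonneg (k + 1),
      harmonicNumber_le k, le_abs_self eulerMascheroniConstant,
      neg_abs_le eulerMascheroniConstant]
  have hb : tfunCoeffs.2 k =
      (3 * eulerMascheroniConstant - 2 * harmonicNumber k - harmonicNumber (k + 1)) *
        tfunCoeffs.1 k := by
    simp only [tfunCoeffs]; ring
  calc |tfunCoeffs.2 k|
      = |3 * eulerMascheroniConstant - 2 * harmonicNumber k - harmonicNumber (k + 1)| *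
          tfunCoeffs.1 k := by rw [hb, abs_mul, abs_of_pos ha]
    _ ≤ (C + 3 * k) * tfunCoeffs.1 k := mul_le_mul_of_nonneg_right hd ha.le
    _ = C * tfunCoeffs.1 k + 3 * (k * tfunCoeffs.1 k) := by ring
    _ ≤ _ := le_abs_self _

theorem Tfun_eq_mul_sum {ω : ℝ} (hω : ω ≠ 0) (s : ℝ) :
    Tfun ω s = s * tfunCoeffs.sum (ω / 2 * s) := by
  rw [LogCoeffs.sum, ← tsum_mul_left]
  refine tsum_congr fun k => ?_
  rcases eq_or_ne s 0 with rfl | hs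
  · simp
  rw [LogCoeffs.term, tfunCoeffs, log_mul (by positivity) hs, log_div hω two_ne_zero]
  field_simp
  ring

theorem sum_eulerOp_tfunCoeffs (z : ℝ) :
    (tfunCoeffs + tfunCoeffs.eulerOp).eulerOp.eulerOp.sum z =
      z * tfunCoeffs.sum z := by
  rw [LogCoeffs.sum_eq_mul_sum_succ (by simp [LogCoeffs.eulerOp]) (by simp [LogCoeffs.eulerOp])]
  congr 2
  ext k
  · simp only [LogCoeffs.eulerOp, tfunCoeffs, Prod.fst_add, Pi.add_apply, Nat.factorial_succ]
    push_cast
    field_simp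
    ring
  · simp only [LogCoeffs.eulerOp, tfunCoeffs, Prod.fst_add, Prod.snd_add, Pi.add_apply,
      Nat.factorial_succ, harmonicNumber_succ]
    push_cast
    field_simp
    ring

/-- For `ω, s > 0`, the series `T` satisfies `2 ∂_ω (s ∂_s² T) = T`. -/
theorem Tfun_pde (ω s : ℝ) (hω : 0 < ω) (hs : 0 < s) :
    2 * deriv (fun w : ℝ => s * iteratedDeriv 2 (fun u : ℝ => Tfun w u) s) ω =
      Tfun ω s := by
  have hp := tfunCoeffs_entire
  have hp₁ := hp.add hp.eulerOp
  have hsecond : ∀ w, 0 < w → s * iteratedDeriv 2 (fun u => Tfun w u) s =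
      (tfunCoeffs + tfunCoeffs.eulerOp).eulerOp.sum (s / 2 * w) := by
    intro w hw
    have hfirst : deriv (fun u => Tfun w u) =ᶠ[𝓝 s]
        fun u => (tfunCoeffs + tfunCoeffs.eulerOp).sum (w / 2 * u) := by
      filter_upwards [Ioi_mem_nhds hs] with u hu
      simp only [Tfun_eq_mul_sum hw.ne']
      exact (hp.hasDerivAt_mul_sum_const_mul (mul_pos (half_pos hw) hu)).deriv
    rw [iteratedDeriv_succ, iteratedDeriv_one, hfirst.deriv_eq,
      (hp₁.hasDerivAt_sum_const_mul (by positivity)).deriv, mul_div_cancel₀ _ hs.ne',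
      div_mul_comm, mul_comm]
  have hderiv : deriv (fun w => s * iteratedDeriv 2 (fun u => Tfun w u) s) ω =
      (tfunCoeffs + tfunCoeffs.eulerOp).eulerOp.eulerOp.sum (s / 2 * ω) / ω := by
    have hev : (fun w => s * iteratedDeriv 2 (fun u => Tfun w u) s) =ᶠ[𝓝 ω]
        fun w => (tfunCoeffs + tfunCoeffs.eulerOp).eulerOp.sum (s / 2 * w) :=
      (eventually_gt_nhds hω).mono hsecond
    rw [hev.deriv_eq]
    exact (hp₁.eulerOp.hasDerivAt_sum_const_mul (by positivity)).deriv
  rw [hderiv, sum_eulerOp_tfunCoeffs, Tfun_eq_mul_sum hω.ne']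
  field_simp
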